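/- Dual optimality of Schrödinger potentials: let μ = (μ_1,…,μ_N) with μ_i ∈ L^∞(X_i,m_i), and for a tuple ψ = (ψ_1,…,ψ_N) of essentially bounded measurable functions define D(ψ) := Σ_{i=1}^N ∫_{X_i} ψ_i μ_i dm_i − ∫_X K(x) exp(Σ_{j=1}^N ψ_j(x_j)) dm(x). If φ is a tuple of essentially bounded measurable functions with T_i(φ) = μ_i m_i-a.e. for every i, then D(ψ) ≤ D(φ) for every tuple ψ of essentially bounded measurable functions; i.e. φ maximizes the dual functional D. -/

import Mathlib

/-! Writing `F = ∑ⱼ φⱼ(xⱼ)`, `G = ∑ⱼ ψⱼ(xⱼ)` and `γ_φ = K e^F`, Fubini turns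
`∑ᵢ ∫ ψᵢ μᵢ dmᵢ = ∑ᵢ ∫ ψᵢ Tᵢ(φ) dmᵢ` into `∫ G γ_φ dm`, so `D(ψ) = ∫ (G γ_φ - K e^G) dm`.
Pointwise `K e^G = γ_φ e^(G - F) ≥ γ_φ (1 + G - F)`, i.e. `G γ_φ - K e^G ≤ F γ_φ - γ_φ`,
and the right-hand side is the integrand of `D(φ)`. -/


open MeasureTheory Filter
open scoped ENNReal

noncomputable section

/-- The density kernel `γ_φ(x) = K(x) exp(∑_j φ_j(x_j))`. -/
def gammaFn {N : ℕ} {X : Fin N → Type*} (K : (∀ i, X i) → ℝ) (φ : ∀ i, X i → ℝ)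
    (x : ∀ i, X i) : ℝ :=
  K x * Real.exp (∑ j, φ j (x j))

/-- `T_i(φ)(x_i) = ∫_{X_{-i}} K(x_i, x_{-i}) exp(∑_j φ_j(x_j)) dm_{-i}(x_{-i})`.
Since every `m j` is a probability measure, integrating over the full product
(with the `i`-th coordinate replaced by `x_i` via `Function.update`) agrees with
integrating over `∏_{j ≠ i} X_j`. -/
def schrT {N : ℕ} {X : Fin N → Type*} [∀ i, MeasurableSpace (X i)]
    (m : ∀ i, Measure (X i)) (K : (∀ i, X i) → ℝ) (φ : ∀ i, X i → ℝ)
    (i : Fin N) (xi : X i) : ℝ :=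
  ∫ y, gammaFn K φ (Function.update y i xi) ∂Measure.pi m

/-- `L_{φ,i}(h)(x_i)`, the conditional-expectation type operator obtained by
linearizing the Schrödinger system. -/
def schrL {N : ℕ} {X : Fin N → Type*} [∀ i, MeasurableSpace (X i)]
    (m : ∀ i, Measure (X i)) (K : (∀ i, X i) → ℝ) (φ h : ∀ i, X i → ℝ)
    (i : Fin N) (xi : X i) : ℝ :=
  (∫ y, gammaFn K φ (Function.update y i xi) *
      ∑ j ∈ Finset.univ.erase i, h j (Function.update y i xi j) ∂Measure.pi m) /
  (∫ y, gammaFn K φ (Function.update y i xi) ∂Measure.pi m)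

/-- A tuple of essentially bounded measurable functions. -/
def BddTuple {N : ℕ} {X : Fin N → Type*} [∀ i, MeasurableSpace (X i)]
    (m : ∀ i, Measure (X i)) (φ : ∀ i, X i → ℝ) : Prop :=
  ∀ i, Measurable (φ i) ∧ MemLp (φ i) ⊤ (m i)

/-- Membership in `E`: essentially bounded measurable tuples with
`∫ φ_i dm_i = 0` for `i = 1, …, N-1` (i.e. all but the last index). -/
def InE {N : ℕ} {X : Fin N → Type*} [∀ i, MeasurableSpace (X i)]
    (m : ∀ i, Measure (X i)) (φ : ∀ i, X i → ℝ) : Prop :=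
  BddTuple m φ ∧ ∀ i : Fin N, (i : ℕ) < N - 1 → ∫ x, φ i x ∂m i = 0

/-- Membership in `F`: essentially bounded measurable tuples whose integrals all coincide. -/
def InF {N : ℕ} {X : Fin N → Type*} [∀ i, MeasurableSpace (X i)]
    (m : ∀ i, Measure (X i)) (μ : ∀ i, X i → ℝ) : Prop :=
  BddTuple m μ ∧ ∀ i j, ∫ x, μ i x ∂m i = ∫ x, μ j x ∂m j

/-- Membership in `F_{++}`: members of `F` which are bounded away from `0`. -/
def InFpp {N : ℕ} {X : Fin N → Type*} [∀ i, MeasurableSpace (X i)]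
    (m : ∀ i, Measure (X i)) (μ : ∀ i, X i → ℝ) : Prop :=
  InF m μ ∧ ∀ i, ∃ c : ℝ, 0 < c ∧ ∀ᵐ x ∂m i, c ≤ μ i x

/-- Membership in `F_{++,M}`: members of `F_{++}` with `1/M ≤ μ_i ≤ M` a.e. -/
def InFppM {N : ℕ} {X : Fin N → Type*} [∀ i, MeasurableSpace (X i)]
    (m : ∀ i, Measure (X i)) (M : ℝ) (μ : ∀ i, X i → ℝ) : Prop :=
  InFpp m μ ∧ ∀ i, ∀ᵐ x ∂m i, 1 / M ≤ μ i x ∧ μ i x ≤ M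

end

theorem MeasureTheory.MemLp.exp_top {α : Type*} [MeasurableSpace α] {μ : Measure α} {f : α → ℝ}
    (hf : MemLp f ⊤ μ) :
    MemLp (fun x => Real.exp (f x)) ⊤ μ := by
  refine memLp_top_of_bound (Real.continuous_exp.comp_aestronglyMeasurable hf.1)
    (Real.exp (eLpNorm f ⊤ μ).toReal) ?_
  filter_upwards [ae_le_eLpNormEssSup (f := f) (μ := μ)] with x hx
  rw [Real.norm_eq_abs, Real.abs_exp, Real.exp_le_exp]
  calc f x ≤ ‖f x‖ := Real.le_norm_self _
    _ = (‖f x‖ₑ).toReal := by simp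
    _ ≤ (eLpNorm f ⊤ μ).toReal := ENNReal.toReal_mono hf.2.ne (by rwa [eLpNorm_exponent_top])

theorem preimage_update_univ_pi {N : ℕ} {X : Fin N → Type*} (i : Fin N) (s : ∀ j, Set (X j)) :
    (fun p : X i × (∀ j, X j) => Function.update p.2 i p.1) ⁻¹' Set.univ.pi s
      = s i ×ˢ Set.univ.pi (Function.update s i Set.univ) := by
  ext ⟨xi, y⟩
  simp only [Set.mem_preimage, Set.mem_univ_pi, Set.mem_prod]
  refine ⟨fun h => ⟨by simpa using h i, fun j => ?_⟩, fun ⟨hi, h⟩ j => ?_⟩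
  · rcases eq_or_ne j i with rfl | hj
    · simp
    · simpa [Function.update_of_ne hj] using h j
  · rcases eq_or_ne j i with rfl | hj
    · simpa using hi
    · simpa [Function.update_of_ne hj] using h j

section ProductSpace

variable {N : ℕ} {X : Fin N → Type*} [∀ i, MeasurableSpace (X i)]
  (m : ∀ i, Measure (X i)) [∀ i, IsProbabilityMeasure (m i)]

theorem BddTuple.memLp_sum {φ : ∀ i, X i → ℝ} (hφ : BddTuple m φ) :
    MemLp (fun x => ∑ j, φ j (x j)) ⊤ (Measure.pi m) :=
  memLp_finsetSum _ fun j _ => (hφ j).2.comp_measurePreserving (measurePreserving_eval m j)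

theorem BddTuple.memLp_gammaFn {K : (∀ i, X i) → ℝ} (hK : MemLp K ⊤ (Measure.pi m))
    {φ : ∀ i, X i → ℝ} (hφ : BddTuple m φ) : MemLp (gammaFn K φ) ⊤ (Measure.pi m) :=
  (hφ.memLp_sum m).exp_top.mul' hK


theorem measurePreserving_update_pi (i : Fin N) :
    MeasurePreserving (fun p : X i × (∀ j, X j) => Function.update p.2 i p.1)
      ((m i).prod (Measure.pi m)) (Measure.pi m) := by
  have hmeas : Measurable fun p : X i × (∀ j, X j) => Function.update p.2 i p.1 :=
    measurable_update'.comp measurable_swap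
  refine ⟨hmeas, (Measure.pi_eq fun s hs => ?_).symm⟩
  rw [Measure.map_apply hmeas (MeasurableSet.univ_pi hs), preimage_update_univ_pi,
    Measure.prod_prod, Measure.pi_pi, ← Finset.mul_prod_erase Finset.univ (fun j => m j (s j))
      (Finset.mem_univ i), ← Finset.mul_prod_erase Finset.univ _ (Finset.mem_univ i)]
  simp only [Function.update_self, measure_univ, one_mul]
  congr 1
  refine Finset.prod_congr rfl fun j hj => ?_
  rw [Function.update_of_ne (Finset.ne_of_mem_erase hj)]

theorem integral_integral_update_pi (i : Fin N) {f : (∀ j, X j) → ℝ}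
    (hf : Integrable f (Measure.pi m)) :
    ∫ xi, ∫ y, f (Function.update y i xi) ∂Measure.pi m ∂m i = ∫ x, f x ∂Measure.pi m := by
  have hmp := measurePreserving_update_pi m i
  calc _ = ∫ p, f (Function.update p.2 i p.1) ∂(m i).prod (Measure.pi m) :=
        (integral_prod _ ((hmp.integrable_comp hf.aestronglyMeasurable).mpr hf)).symm
    _ = ∫ x, f x ∂Measure.pi m := by
        conv_rhs => rw [← hmp.map_eq]
        exact (integral_map hmp.measurable.aemeasurable (by rw [hmp.map_eq]; exact hf.1)).symm

theorem integral_mul_integral_update_pi (i : Fin N) {g : X i → ℝ} {f : (∀ j, X j) → ℝ}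
    (hgf : Integrable (fun x => g (x i) * f x) (Measure.pi m)) :
    ∫ xi, g xi * ∫ y, f (Function.update y i xi) ∂Measure.pi m ∂m i
      = ∫ x, g (x i) * f x ∂Measure.pi m := by
  rw [← integral_integral_update_pi m i hgf]
  simp only [Function.update_self, integral_const_mul]

end ProductSpace

theorem Real.exp_mul_sub_add_one_le_exp (s t : ℝ) : Real.exp t * (s - t + 1) ≤ Real.exp s := by
  calc Real.exp t * (s - t + 1) ≤ Real.exp t * Real.exp (s - t) := by
        gcongr; linarith [Real.add_one_le_exp (s - t)]
    _ = Real.exp s := by rw [← Real.exp_add, add_sub_cancel]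

section Schrodinger

variable {N : ℕ} {X : Fin N → Type*} [∀ i, MeasurableSpace (X i)]
  {m : ∀ i, Measure (X i)} [∀ i, IsProbabilityMeasure (m i)]
  {K : (∀ i, X i) → ℝ} {φ ψ μ : ∀ i, X i → ℝ}

theorem sum_integral_mul_eq_integral_sum_mul_gammaFn (hK : MemLp K ⊤ (Measure.pi m))
    (hφ : BddTuple m φ) (hTφ : ∀ i, schrT m K φ i =ᵐ[m i] μ i) (hψ : BddTuple m ψ) :
    ∑ i, ∫ x, ψ i x * μ i x ∂m i = ∫ x, (∑ j, ψ j (x j)) * gammaFn K φ x ∂Measure.pi m := by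
  have hint (i : Fin N) : Integrable (fun x => ψ i (x i) * gammaFn K φ x) (Measure.pi m) :=
    ((hφ.memLp_gammaFn m hK).mul' ((hψ i).2.comp_measurePreserving
      (measurePreserving_eval m i))).integrable le_top
  have hterm (i : Fin N) :
      ∫ x, ψ i x * μ i x ∂m i = ∫ x, ψ i (x i) * gammaFn K φ x ∂Measure.pi m := by
    rw [← integral_mul_integral_update_pi m i (hint i)]
    refine integral_congr_ae ?_
    filter_upwards [hTφ i] with xi h
    rw [← h, schrT]
  simp_rw [hterm, Finset.sum_mul]
  exact (integral_finsetSum _ fun i _ => hint i).symm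

theorem integrable_sum_mul_gammaFn_sub_gammaFn (hK : MemLp K ⊤ (Measure.pi m))
    (hφ : BddTuple m φ) (hψ : BddTuple m ψ) :
    Integrable (fun x => (∑ j, ψ j (x j)) * gammaFn K φ x - gammaFn K ψ x) (Measure.pi m) :=
  (((hφ.memLp_gammaFn m hK).mul' (hψ.memLp_sum m)).sub
    (hψ.memLp_gammaFn m hK)).integrable le_top

theorem dual_eq_integral_sum_mul_gammaFn_sub_gammaFn (hK : MemLp K ⊤ (Measure.pi m))
    (hφ : BddTuple m φ) (hTφ : ∀ i, schrT m K φ i =ᵐ[m i] μ i) (hψ : BddTuple m ψ) :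
    (∑ i, ∫ x, ψ i x * μ i x ∂m i) - ∫ x, K x * Real.exp (∑ j, ψ j (x j)) ∂Measure.pi m
      = ∫ x, (∑ j, ψ j (x j)) * gammaFn K φ x - gammaFn K ψ x ∂Measure.pi m := by
  rw [sum_integral_mul_eq_integral_sum_mul_gammaFn hK hφ hTφ hψ, integral_sub]
  · rfl
  · exact ((hφ.memLp_gammaFn m hK).mul' (hψ.memLp_sum m)).integrable le_top
  · exact (hψ.memLp_gammaFn m hK).integrable le_top

end Schrodinger

theorem dual_optimality_general
    {N : ℕ} {X : Fin N → Type*} [∀ i, MeasurableSpace (X i)]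
    (m : ∀ i, MeasureTheory.Measure (X i)) [∀ i, MeasureTheory.IsProbabilityMeasure (m i)]
    (K : (∀ i, X i) → ℝ) (a b : ℝ) (ha : 0 < a)
    (hK : Measurable K) (hKb : ∀ᵐ x ∂MeasureTheory.Measure.pi m, a ≤ K x ∧ K x ≤ b)
    (μ : ∀ i, X i → ℝ)
    (φ : ∀ i, X i → ℝ) (hφ : BddTuple m φ) (hTφ : ∀ i, schrT m K φ i =ᵐ[m i] μ i) :
    ∀ ψ : ∀ i, X i → ℝ, BddTuple m ψ →
      (∑ i, ∫ x, ψ i x * μ i x ∂m i) -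
          ∫ x, K x * Real.exp (∑ j, ψ j (x j)) ∂MeasureTheory.Measure.pi m ≤
        (∑ i, ∫ x, φ i x * μ i x ∂m i) -
          ∫ x, K x * Real.exp (∑ j, φ j (x j)) ∂MeasureTheory.Measure.pi m := by
  intro ψ hψ
  have hKmem : MemLp K ⊤ (Measure.pi m) := by
    refine memLp_top_of_bound hK.aestronglyMeasurable b ?_
    filter_upwards [hKb] with x hx
    rw [Real.norm_eq_abs, abs_le]
    constructor <;> linarith [hx.1, hx.2]
  rw [dual_eq_integral_sum_mul_gammaFn_sub_gammaFn hKmem hφ hTφ hψ,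
    dual_eq_integral_sum_mul_gammaFn_sub_gammaFn hKmem hφ hTφ hφ]
  refine integral_mono_ae (integrable_sum_mul_gammaFn_sub_gammaFn hKmem hφ hψ)
    (integrable_sum_mul_gammaFn_sub_gammaFn hKmem hφ hφ) ?_
  filter_upwards [hKb] with x hx
  have hexp := mul_le_mul_of_nonneg_left
    (Real.exp_mul_sub_add_one_le_exp (∑ j, ψ j (x j)) (∑ j, φ j (x j))) (ha.le.trans hx.1)
  simp only [gammaFn]
  linarith

/-- Dual optimality of Schrödinger potentials: any solution `φ` of
`T(φ) = μ` maximizes the dual functional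
`D(ψ) = ∑ ∫ ψ_i μ_i dm_i − ∫ K exp(∑ ψ_j(x_j)) dm`. -/
theorem dual_optimality
    {N : ℕ} (hN : 2 ≤ N) {X : Fin N → Type*} [∀ i, MeasurableSpace (X i)]
    (m : ∀ i, MeasureTheory.Measure (X i)) [∀ i, MeasureTheory.IsProbabilityMeasure (m i)]
    (K : (∀ i, X i) → ℝ) (a b : ℝ) (ha : 0 < a) (hab : a ≤ b)
    (hK : Measurable K) (hKb : ∀ᵐ x ∂MeasureTheory.Measure.pi m, a ≤ K x ∧ K x ≤ b)
    (μ : ∀ i, X i → ℝ) (hμ : BddTuple m μ)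
    (φ : ∀ i, X i → ℝ) (hφ : BddTuple m φ) (hTφ : ∀ i, schrT m K φ i =ᵐ[m i] μ i) :
    ∀ ψ : ∀ i, X i → ℝ, BddTuple m ψ →
      (∑ i, ∫ x, ψ i x * μ i x ∂m i) -
          ∫ x, K x * Real.exp (∑ j, ψ j (x j)) ∂MeasureTheory.Measure.pi m ≤
        (∑ i, ∫ x, φ i x * μ i x ∂m i) -
          ∫ x, K x * Real.exp (∑ j, φ j (x j)) ∂MeasureTheory.Measure.pi m :=
  dual_optimality_general m K a b ha hK hKb μ φ hφ hTφ
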